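/- arXiv:2504.12874 — 2 statements merged into one kernel-verified Lean document; each statement's English description precedes it below -/
import Mathlib

section
/- Let M be an object of Morph(Mod-R), E_M its endomorphism ring in Morph(Mod-R), ε : E_M → End(M0) × End(M1) the canonical embedding, π_i : End(M0) × End(M1) → End(M_i) the projections (i = 0, 1), and E_i := π_i(ε(E_M)). Then the ring E_M is semilocal if and only if both rings E_0 and E_1 are semilocal. -/
universe u

/-- The endomorphism ring `E_M` of an object `μ : M₀ → M₁` of the morphism category
`Morph(Mod-A)`: pairs `(u₀, u₁)` of endomorphisms with `u₁ ∘ μ = μ ∘ u₀`, as a subring of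
`End(M₀) × End(M₁)`. -/
def MorphEnd {A : Type u} [Ring A] {M₀ M₁ : Type u} [AddCommGroup M₀] [AddCommGroup M₁]
    [Module A M₀] [Module A M₁] (μ : M₀ →ₗ[A] M₁) :
    Subring (Module.End A M₀ × Module.End A M₁) where
  carrier := {u | ∀ x, u.2 (μ x) = μ (u.1 x)}
  mul_mem' {a b} ha hb := fun x => by
    show (a.2 * b.2) (μ x) = μ ((a.1 * b.1) x)
    rw [Module.End.mul_apply, Module.End.mul_apply, hb x, ha (b.1 x)]
  one_mem' := fun x => rfl
  add_mem' {a b} ha hb := fun x => by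
    show (a.2 + b.2) (μ x) = μ ((a.1 + b.1) x)
    rw [LinearMap.add_apply, LinearMap.add_apply, map_add, ha x, hb x]
  zero_mem' := fun x => by
    show (0 : Module.End _ _) (μ x) = μ ((0 : Module.End _ _) x)
    simp
  neg_mem' {a} ha := fun x => by
    show (-a.2) (μ x) = μ ((-a.1) x)
    simp [ha x]

section ProjImages

variable {A : Type u} [Ring A] {M₀ M₁ : Type u} [AddCommGroup M₀] [AddCommGroup M₁]
  [Module A M₀] [Module A M₁]

/-- `E₀ = π₀(ε(E_M))`, the image of `E_M` under the first projection. -/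
def morphE0 (μ : M₀ →ₗ[A] M₁) : Subring (Module.End A M₀) :=
  (MorphEnd μ).map (RingHom.fst (Module.End A M₀) (Module.End A M₁))

/-- `E₁ = π₁(ε(E_M))`, the image of `E_M` under the second projection. -/
def morphE1 (μ : M₀ →ₗ[A] M₁) : Subring (Module.End A M₁) :=
  (MorphEnd μ).map (RingHom.snd (Module.End A M₀) (Module.End A M₁))

/-- The first component of an element of `E_M`, as an element of `E₀`. -/
def proj0 (μ : M₀ →ₗ[A] M₁) (u : MorphEnd μ) : morphE0 μ :=
  ⟨(u : Module.End A M₀ × Module.End A M₁).1, ⟨u.1, u.2, rfl⟩⟩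

/-- The second component of an element of `E_M`, as an element of `E₁`. -/
def proj1 (μ : M₀ →ₗ[A] M₁) (u : MorphEnd μ) : morphE1 μ :=
  ⟨(u : Module.End A M₀ × Module.End A M₁).2, ⟨u.1, u.2, rfl⟩⟩

end ProjImages

/-- A ring `S` is semilocal if `S/J(S)` is a semisimple (artinian) ring, where `J(S)` is
the Jacobson radical of `S`. -/
def IsSemilocalRing (S : Type*) [Ring S] : Prop :=
  IsSemisimpleRing ((⊥ : TwoSidedIdeal S).jacobson.ringCon).Quotient

/-!
`E_M` is a subring of `End(M₀) × End(M₁)` with images `E₀`, `E₁` under the projections, and an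
element with vanishing first component times one with vanishing second component is zero.
For a ring `S` with surjections `f : S → T₀`, `g : S → T₁` such that `ker f · ker g = 0`, an
element lies in `J(S)` as soon as its images lie in `J(T₀)` and `J(T₁)`. Hence `S/J(S)` embeds
into `T₀/J(T₀) × T₁/J(T₁)` with surjective components; both factors are semisimple
`S/J(S)`-modules, so `S/J(S)` is semisimple. Conversely, semilocality passes to quotient rings.
-/

open TwoSidedIdeal

abbrev JacobsonQuotient (S : Type*) [Ring S] : Type _ :=
  ((⊥ : TwoSidedIdeal S).jacobson.ringCon).Quotient

section Semisimple

variable {R S₀ S₁ M N : Type*} [Ring R] [Ring S₀] [Ring S₁]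
  [AddCommGroup M] [AddCommGroup N] [Module R M] [Module R N]

instance IsSemisimpleModule.prod [IsSemisimpleModule R M] [IsSemisimpleModule R N] :
    IsSemisimpleModule R (M × N) := by
  have := IsSemisimpleModule.sup (IsSemisimpleModule.range (LinearMap.inl R M N))
    (IsSemisimpleModule.range (LinearMap.inr R M N))
  rw [LinearMap.sup_range_inl_inr] at this
  exact .congr Submodule.topEquiv.symm

theorem IsSemisimpleModule.of_surjective_ringHom [Module S₀ M] [IsSemisimpleModule S₀ M]
    (f : R →+* S₀) (hf : Function.Surjective f) (hsmul : ∀ (r : R) (m : M), f r • m = r • m) :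
    IsSemisimpleModule R M := by
  have : RingHomSurjective f := ⟨hf⟩
  let e : M →ₛₗ[f] M := { AddMonoidHom.id M with map_smul' := fun r m => (hsmul r m).symm }
  exact (e.isSemisimpleModule_iff_of_bijective Function.bijective_id).mpr ‹_›

theorem IsSemisimpleRing.of_injective_prod [IsSemisimpleRing S₀] [IsSemisimpleRing S₁]
    (f : R →+* S₀) (g : R →+* S₁) (hf : Function.Surjective f) (hg : Function.Surjective g)
    (hfg : Function.Injective (f.prod g)) : IsSemisimpleRing R := by
  let := Module.compHom S₀ f
  let := Module.compHom S₁ g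
  have := IsSemisimpleModule.of_surjective_ringHom (M := S₀) f hf fun _ _ => rfl
  have := IsSemisimpleModule.of_surjective_ringHom (M := S₁) g hg fun _ _ => rfl
  let φ : R →ₗ[R] S₀ × S₁ := { f.prod g with map_smul' := map_mul (f.prod g) }
  exact IsSemisimpleModule.of_injective φ hfg

end Semisimple

section Jacobson

variable {S T T₀ T₁ : Type*} [Ring S] [Ring T] [Ring T₀] [Ring T₁]

theorem mem_jacobson_bot_iff_exists_mul_eq_one {x : S} :
    x ∈ (⊥ : TwoSidedIdeal S).jacobson ↔ ∀ y, ∃ z, z * (y * x + 1) = 1 := by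
  rw [mem_jacobson_iff]
  refine forall_congr' fun y => exists_congr fun z => ?_
  rw [mem_bot, sub_eq_zero, mul_add, mul_one, mul_assoc]

theorem map_mem_jacobson_bot {f : S →+* T} (hf : Function.Surjective f) {x : S}
    (hx : x ∈ (⊥ : TwoSidedIdeal S).jacobson) : f x ∈ (⊥ : TwoSidedIdeal T).jacobson := by
  rw [mem_jacobson_bot_iff_exists_mul_eq_one] at hx ⊢
  intro y
  obtain ⟨y, rfl⟩ := hf y
  obtain ⟨z, hz⟩ := hx y
  exact ⟨f z, by simpa using congrArg f hz⟩

/-- With `a * w - 1 ∈ ker f` and `b * w - 1 ∈ ker g`, the element `a + b - a * w * b` is a left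
inverse of `w`, since `(a + b - a * w * b) * w = 1 - (a * w - 1) * (b * w - 1)`. -/
theorem mem_jacobson_bot_of_map_mem {f : S →+* T₀} {g : S →+* T₁} (hf : Function.Surjective f)
    (hg : Function.Surjective g) (hfg : ∀ x y, f x = 0 → g y = 0 → x * y = 0) {x : S}
    (hx₀ : f x ∈ (⊥ : TwoSidedIdeal T₀).jacobson) (hx₁ : g x ∈ (⊥ : TwoSidedIdeal T₁).jacobson) :
    x ∈ (⊥ : TwoSidedIdeal S).jacobson := by
  rw [mem_jacobson_bot_iff_exists_mul_eq_one] at hx₀ hx₁ ⊢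
  intro y
  obtain ⟨a₀, ha₀⟩ := hx₀ (f y)
  obtain ⟨a₁, ha₁⟩ := hx₁ (g y)
  obtain ⟨a, rfl⟩ := hf a₀
  obtain ⟨b, rfl⟩ := hg a₁
  set w := y * x + 1
  have hker : (a * w - 1) * (b * w - 1) = 0 :=
    hfg _ _ (by simp [w, ha₀]) (by simp [w, ha₁])
  refine ⟨a + b - a * w * b, ?_⟩
  calc (a + b - a * w * b) * w = 1 - (a * w - 1) * (b * w - 1) := by noncomm_ring
    _ = 1 := by rw [hker, sub_zero]

theorem JacobsonQuotient.mk_eq_zero_iff {x : S} :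
    (x : JacobsonQuotient S) = 0 ↔ x ∈ (⊥ : TwoSidedIdeal S).jacobson :=
  RingCon.eq _

def JacobsonQuotient.map (f : S →+* T) (hf : Function.Surjective f) :
    JacobsonQuotient S →+* JacobsonQuotient T :=
  RingCon.lift _ ((RingCon.mk' _).comp f) fun x y hxy => by
    rw [RingCon.ker_apply, RingHom.comp_apply, RingHom.comp_apply, RingCon.coe_mk', RingCon.eq,
      rel_iff, ← map_sub]
    exact map_mem_jacobson_bot hf ((rel_iff _ _ _).mp hxy)

theorem JacobsonQuotient.map_surjective (f : S →+* T) (hf : Function.Surjective f) :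
    Function.Surjective (JacobsonQuotient.map f hf) := by
  intro q
  obtain ⟨y, rfl⟩ := RingCon.mk'_surjective _ q
  obtain ⟨x, rfl⟩ := hf y
  exact ⟨x, rfl⟩

theorem IsSemilocalRing.of_surjective (f : S →+* T) (hf : Function.Surjective f)
    (h : IsSemilocalRing S) : IsSemilocalRing T :=
  have : IsSemisimpleRing (JacobsonQuotient S) := h
  (JacobsonQuotient.map f hf).isSemisimpleRing_of_surjective (JacobsonQuotient.map_surjective f hf)

theorem IsSemilocalRing.of_surjective_of_mul_eq_zero (f : S →+* T₀) (g : S →+* T₁)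
    (hf : Function.Surjective f) (hg : Function.Surjective g)
    (hfg : ∀ x y, f x = 0 → g y = 0 → x * y = 0)
    (h₀ : IsSemilocalRing T₀) (h₁ : IsSemilocalRing T₁) : IsSemilocalRing S := by
  have : IsSemisimpleRing (JacobsonQuotient T₀) := h₀
  have : IsSemisimpleRing (JacobsonQuotient T₁) := h₁
  refine IsSemisimpleRing.of_injective_prod _ _ (JacobsonQuotient.map_surjective f hf)
    (JacobsonQuotient.map_surjective g hg) ?_
  rw [injective_iff_map_eq_zero]
  intro q hq
  obtain ⟨x, rfl⟩ := RingCon.mk'_surjective _ q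
  rw [Prod.ext_iff] at hq
  exact JacobsonQuotient.mk_eq_zero_iff.mpr <| mem_jacobson_bot_of_map_mem hf hg hfg
    (JacobsonQuotient.mk_eq_zero_iff.mp hq.1) (JacobsonQuotient.mk_eq_zero_iff.mp hq.2)

end Jacobson

def RingHom.subringMap {R S : Type*} [Ring R] [Ring S] (f : R →+* S) (s : Subring R) :
    s →+* s.map f :=
  f.restrict s _ fun x hx => ⟨x, hx, rfl⟩

theorem RingHom.subringMap_surjective {R S : Type*} [Ring R] [Ring S] (f : R →+* S)
    (s : Subring R) : Function.Surjective (f.subringMap s) := by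
  rintro ⟨_, x, hx, rfl⟩
  exact ⟨⟨x, hx⟩, rfl⟩

theorem Subring.isSemilocalRing_iff_map_fst_and_map_snd {A B : Type*} [Ring A] [Ring B]
    (s : Subring (A × B)) :
    IsSemilocalRing s ↔
      IsSemilocalRing (s.map (RingHom.fst A B)) ∧ IsSemilocalRing (s.map (RingHom.snd A B)) := by
  have hfst := (RingHom.fst A B).subringMap_surjective s
  have hsnd := (RingHom.snd A B).subringMap_surjective s
  refine ⟨fun h => ⟨h.of_surjective _ hfst, h.of_surjective _ hsnd⟩,
    fun ⟨h₀, h₁⟩ => .of_surjective_of_mul_eq_zero _ _ hfst hsnd ?_ h₀ h₁⟩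
  intro u v hu hv
  have hu : (u : A × B).1 = 0 := congrArg Subtype.val hu
  have hv : (v : A × B).2 = 0 := congrArg Subtype.val hv
  ext <;> simp [hu, hv]

/-- Let `M` be an object of `Morph(Mod-R)`, `E_M` its endomorphism
ring, and `E_i := π_i(ε(E_M))` the images of `E_M` in `End(M₀)` and `End(M₁)` under the
canonical projections. Then `E_M` is semilocal if and only if both `E₀` and `E₁` are
semilocal. -/
theorem morphEnd_semilocal_iff (R : Type u) [Ring R] (M₀ M₁ : Type u)
    [AddCommGroup M₀] [AddCommGroup M₁] [Module Rᵐᵒᵖ M₀] [Module Rᵐᵒᵖ M₁]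
    (μ : M₀ →ₗ[Rᵐᵒᵖ] M₁) :
    IsSemilocalRing (MorphEnd μ) ↔
      IsSemilocalRing (morphE0 μ) ∧ IsSemilocalRing (morphE1 μ) :=
  (MorphEnd μ).isSemilocalRing_iff_map_fst_and_map_snd
end

section
/- Let μ_M : M0 → M1 be an object of Morph(Mod-R) with M0 and M1 non-zero uniserial right R-modules. Then the endomorphism ring E_M of M in Morph(Mod-R) has at most four maximal right (equivalently, left) ideals, and every maximal right ideal of E_M is among the completely prime two-sided ideals I_0 := {(u0, u1) ∈ E_M : u0 is not injective}, I_1 := {(u0, u1) ∈ E_M : u1 is not injective}, K_0 := {(u0, u1) ∈ E_M : u0 is not surjective}, and K_1 := {(u0, u1) ∈ E_M : u1 is not surjective}. -/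
universe u

/-- `J` is a right ideal of the ring `A` (as a set). -/
def IsRightIdealSet {A : Type*} [Ring A] (J : Set A) : Prop :=
  (0 : A) ∈ J ∧ (∀ x ∈ J, ∀ y ∈ J, x + y ∈ J) ∧ (∀ x ∈ J, ∀ a : A, x * a ∈ J) ∧
    ∀ x ∈ J, -x ∈ J

/-- `J` is a maximal right ideal of the ring `A`. -/
def IsMaxRightIdealSet {A : Type*} [Ring A] (J : Set A) : Prop :=
  IsRightIdealSet J ∧ J ≠ Set.univ ∧
    ∀ K : Set A, IsRightIdealSet K → J ⊆ K → K ≠ Set.univ → K = J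

/-- `J` is a left ideal of the ring `A` (as a set). -/
def IsLeftIdealSet {A : Type*} [Ring A] (J : Set A) : Prop :=
  (0 : A) ∈ J ∧ (∀ x ∈ J, ∀ y ∈ J, x + y ∈ J) ∧ (∀ x ∈ J, ∀ a : A, a * x ∈ J) ∧
    ∀ x ∈ J, -x ∈ J

/-- `J` is a maximal left ideal of the ring `A`. -/
def IsMaxLeftIdealSet {A : Type*} [Ring A] (J : Set A) : Prop :=
  IsLeftIdealSet J ∧ J ≠ Set.univ ∧
    ∀ K : Set A, IsLeftIdealSet K → J ⊆ K → K ≠ Set.univ → K = J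

/-- `J` is a two-sided ideal of the ring `A` (as a set). -/
def IsTwoSidedIdealSet {A : Type*} [Ring A] (J : Set A) : Prop :=
  IsRightIdealSet J ∧ ∀ x ∈ J, ∀ a : A, a * x ∈ J

/-- `J` is a completely prime (proper, two-sided) ideal of the ring `A`: for all
`x, y ∈ A`, `x * y ∈ J` implies `x ∈ J` or `y ∈ J`. -/
def IsCompletelyPrimeIdealSet {A : Type*} [Ring A] (J : Set A) : Prop :=
  IsTwoSidedIdealSet J ∧ J ≠ Set.univ ∧ ∀ x y : A, x * y ∈ J → x ∈ J ∨ y ∈ J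

/-- A ring `A` is of type `n` if it has exactly `n` maximal right ideals and these are
all two-sided ideals. -/
def RingOfType (A : Type*) [Ring A] (n : ℕ) : Prop :=
  ∃ s : Finset (Set A), s.card = n ∧ (∀ J : Set A, IsMaxRightIdealSet J ↔ J ∈ s) ∧
    ∀ J ∈ s, IsTwoSidedIdealSet J

/-! In a uniserial module any two kernels, and any two images, are comparable. Hence the
non-injective and the non-surjective endomorphisms of `M₀` and of `M₁` form completely prime
two-sided ideals, and `I₀, I₁, K₀, K₁` are their preimages under the two projections
`E_M → End(Mᵢ)`. An element of `E_M` outside all four has bijective components, so its inverse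
again commutes with `μ` and it is a unit. A proper one-sided ideal therefore lies in
`I₀ ∪ I₁ ∪ K₀ ∪ K₁`, and prime avoidance (which holds for completely prime ideals of any ring)
puts it inside one of the four; maximality then gives equality. -/

section IdealSets

variable {A B : Type*} [Ring A] [Ring B]

theorem IsRightIdealSet.not_isUnit_of_mem {J : Set A} (hJ : IsRightIdealSet J)
    (hne : J ≠ Set.univ) {a : A} (ha : a ∈ J) : ¬ IsUnit a := by
  rintro ⟨v, rfl⟩
  have h1 : (1 : A) ∈ J := by simpa using hJ.2.2.1 _ ha ↑v⁻¹
  exact hne (Set.eq_univ_of_forall fun b => by simpa using hJ.2.2.1 1 h1 b)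

theorem IsLeftIdealSet.not_isUnit_of_mem {J : Set A} (hJ : IsLeftIdealSet J)
    (hne : J ≠ Set.univ) {a : A} (ha : a ∈ J) : ¬ IsUnit a := by
  rintro ⟨v, rfl⟩
  have h1 : (1 : A) ∈ J := by simpa using hJ.2.2.1 _ ha ↑v⁻¹
  exact hne (Set.eq_univ_of_forall fun b => by simpa using hJ.2.2.1 1 h1 b)

namespace IsCompletelyPrimeIdealSet

variable {Q : Set A}

theorem isLeftIdealSet (hQ : IsCompletelyPrimeIdealSet Q) : IsLeftIdealSet Q :=
  ⟨hQ.1.1.1, hQ.1.1.2.1, hQ.1.2, hQ.1.1.2.2.2⟩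

theorem add_mem_iff_right (hQ : IsCompletelyPrimeIdealSet Q) {a b : A} (ha : a ∈ Q) :
    a + b ∈ Q ↔ b ∈ Q := by
  refine ⟨fun h => ?_, hQ.1.1.2.1 a ha b⟩
  simpa using hQ.1.1.2.1 _ (hQ.1.1.2.2.2 a ha) _ h

theorem add_mem_iff_left (hQ : IsCompletelyPrimeIdealSet Q) {a b : A} (hb : b ∈ Q) :
    a + b ∈ Q ↔ a ∈ Q := by
  rw [add_comm, hQ.add_mem_iff_right hb]

theorem preimage (hQ : IsCompletelyPrimeIdealSet Q) (φ : B →+* A) :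
    IsCompletelyPrimeIdealSet (φ ⁻¹' Q) := by
  obtain ⟨⟨⟨h0, hadd, hmulr, hneg⟩, hmull⟩, hne, hprime⟩ := hQ
  refine ⟨⟨⟨?_, ?_, ?_, ?_⟩, ?_⟩, ?_, ?_⟩
  · simpa using h0
  · intro x hx y hy
    simpa using hadd _ hx _ hy
  · intro x hx a
    simpa using hmulr _ hx (φ a)
  · intro x hx
    simpa using hneg _ hx
  · intro x hx a
    simpa using hmull _ hx (φ a)
  · intro h
    have h1 : φ 1 ∈ Q := show (1 : B) ∈ φ ⁻¹' Q from h ▸ Set.mem_univ 1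
    exact hne (Set.eq_univ_of_forall fun b => by simpa using hmulr _ h1 b)
  · intro x y hxy
    exact hprime _ _ (by simpa using hxy)

end IsCompletelyPrimeIdealSet

end IdealSets

section Avoidance

variable {A : Type*} [Ring A]

theorem not_inter_biInter_subset_of_completelyPrime {P Q₀ : Set A}
    (hmul : ∀ x ∈ P, ∀ y ∈ P, x * y ∈ P) (hQ₀ : IsCompletelyPrimeIdealSet Q₀) (hPQ₀ : ¬ P ⊆ Q₀)
    (t : Finset (Set A)) (ht : ∀ Q ∈ t, IsTwoSidedIdealSet Q) (hsep : ∀ Q ∈ t, ¬ P ∩ Q ⊆ Q₀) :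
    ¬ P ∩ ⋂ Q ∈ t, Q ⊆ Q₀ := by
  classical
  induction t using Finset.induction_on with
  | empty => simpa using hPQ₀
  | insert Q t _ ih =>
    obtain ⟨z, ⟨hzP, hzt⟩, hzQ₀⟩ := Set.not_subset.mp
      (ih (fun Q' h => ht Q' (Finset.mem_insert_of_mem h))
        (fun Q' h => hsep Q' (Finset.mem_insert_of_mem h)))
    obtain ⟨x, ⟨hxP, hxQ⟩, hxQ₀⟩ := Set.not_subset.mp (hsep Q (Finset.mem_insert_self Q t))
    refine Set.not_subset.mpr ⟨x * z, ⟨hmul x hxP z hzP, ?_⟩, ?_⟩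
    · simp only [Finset.mem_insert, Set.iInter_iInter_eq_or_left, Set.mem_inter_iff,
        Set.mem_iInter] at hzt ⊢
      exact ⟨(ht Q (Finset.mem_insert_self Q t)).1.2.2.1 x hxQ z,
        fun Q' hQ' => (ht Q' (Finset.mem_insert_of_mem hQ')).2 z (hzt Q' hQ') x⟩
    · exact fun h => (hQ₀.2.2 x z h).elim hxQ₀ hzQ₀

theorem exists_subset_of_subset_biUnion_completelyPrime {P : Set A} (hne : P.Nonempty)
    (hadd : ∀ x ∈ P, ∀ y ∈ P, x + y ∈ P) (hmul : ∀ x ∈ P, ∀ y ∈ P, x * y ∈ P)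
    (s : Finset (Set A)) (hs : ∀ Q ∈ s, IsCompletelyPrimeIdealSet Q)
    (hcov : P ⊆ ⋃ Q ∈ s, Q) : ∃ Q ∈ s, P ⊆ Q := by
  classical
  induction s using Finset.strongInduction with
  | H s ih =>
  by_contra! hnot
  have hsep : ∀ Q ∈ s, ∃ x ∈ P, x ∈ Q ∧ ∀ Q' ∈ s.erase Q, x ∉ Q' := by
    intro Q hQ
    have hncov : ¬ P ⊆ ⋃ Q' ∈ s.erase Q, Q' := fun h => by
      obtain ⟨Q', hQ', hPQ'⟩ := ih _ (Finset.erase_ssubset hQ)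
        (fun Q' h => hs Q' (Finset.mem_of_mem_erase h)) h
      exact hnot Q' (Finset.mem_of_mem_erase hQ') hPQ'
    obtain ⟨x, hxP, hx⟩ := Set.not_subset.mp hncov
    simp only [Set.mem_iUnion, not_exists] at hx
    obtain ⟨Q', hQ', hxQ'⟩ := Set.mem_iUnion₂.mp (hcov hxP)
    obtain rfl : Q' = Q := by_contra fun h => hx Q' (Finset.mem_erase.mpr ⟨h, hQ'⟩) hxQ'
    exact ⟨x, hxP, hxQ', hx⟩
  obtain ⟨p, hp⟩ := hne
  obtain ⟨Q₀, hQ₀, -⟩ := Set.mem_iUnion₂.mp (hcov hp)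
  obtain ⟨x₀, hx₀P, hx₀Q₀, hx₀⟩ := hsep Q₀ hQ₀
  obtain ⟨z, ⟨hzP, hz⟩, hzQ₀⟩ := Set.not_subset.mp <|
    not_inter_biInter_subset_of_completelyPrime hmul (hs Q₀ hQ₀) (hnot Q₀ hQ₀) (s.erase Q₀)
      (fun Q hQ => (hs Q (Finset.mem_of_mem_erase hQ)).1) fun Q hQ => by
        obtain ⟨hQQ₀, hQs⟩ := Finset.mem_erase.mp hQ
        obtain ⟨x, hxP, hxQ, hx⟩ := hsep Q hQs
        exact Set.not_subset.mpr ⟨x, ⟨hxP, hxQ⟩, hx Q₀ (Finset.mem_erase.mpr ⟨Ne.symm hQQ₀, hQ₀⟩)⟩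
  rw [Set.mem_iInter₂] at hz
  -- `z` lies in every member of `s` except `Q₀`, and `x₀` only in `Q₀`
  obtain ⟨Q, hQ, hyQ⟩ := Set.mem_iUnion₂.mp (hcov (hadd _ hx₀P _ hzP))
  by_cases hQQ₀ : Q = Q₀
  · subst hQQ₀
    exact hzQ₀ (((hs Q hQ).add_mem_iff_right hx₀Q₀).mp hyQ)
  · have hQ' : Q ∈ s.erase Q₀ := Finset.mem_erase.mpr ⟨hQQ₀, hQ⟩
    exact hx₀ Q hQ' (((hs Q hQ).add_mem_iff_left (hz Q hQ')).mp hyQ)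

theorem IsMaxRightIdealSet.mem_of_nonunits_subset_biUnion (s : Finset (Set A))
    (hs : ∀ Q ∈ s, IsCompletelyPrimeIdealSet Q) (hcov : ∀ a : A, ¬ IsUnit a → ∃ Q ∈ s, a ∈ Q)
    {P : Set A} (hP : IsMaxRightIdealSet P) : P ∈ s := by
  obtain ⟨hPr, hPne, hPmax⟩ := hP
  obtain ⟨Q, hQs, hPQ⟩ := exists_subset_of_subset_biUnion_completelyPrime ⟨0, hPr.1⟩ hPr.2.1
    (fun x hx y _ => hPr.2.2.1 x hx y) s hs fun a ha => by
      obtain ⟨Q, hQ, haQ⟩ := hcov a (hPr.not_isUnit_of_mem hPne ha)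
      exact Set.mem_biUnion hQ haQ
  rwa [← hPmax Q (hs Q hQs).1.1 hPQ (hs Q hQs).2.1]

theorem IsMaxLeftIdealSet.mem_of_nonunits_subset_biUnion (s : Finset (Set A))
    (hs : ∀ Q ∈ s, IsCompletelyPrimeIdealSet Q) (hcov : ∀ a : A, ¬ IsUnit a → ∃ Q ∈ s, a ∈ Q)
    {P : Set A} (hP : IsMaxLeftIdealSet P) : P ∈ s := by
  obtain ⟨hPl, hPne, hPmax⟩ := hP
  obtain ⟨Q, hQs, hPQ⟩ := exists_subset_of_subset_biUnion_completelyPrime ⟨0, hPl.1⟩ hPl.2.1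
    (fun x _ y hy => hPl.2.2.1 y hy x) s hs fun a ha => by
      obtain ⟨Q, hQ, haQ⟩ := hcov a (hPl.not_isUnit_of_mem hPne ha)
      exact Set.mem_biUnion hQ haQ
  rwa [← hPmax Q (hs Q hQs).isLeftIdealSet hPQ (hs Q hQs).2.1]

end Avoidance

namespace Module.End

open LinearMap

variable {R M : Type*} [Ring R] [AddCommGroup M] [Module R M]
  (huni : ∀ A B : Submodule R M, A ≤ B ∨ B ≤ A)
include huni

theorem ker_mul_ne_bot_of_left {f : Module.End R M} (hf : ker f ≠ ⊥) (g : Module.End R M) :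
    ker (f * g) ≠ ⊥ := by
  rcases huni (range g) (ker f) with h | h
  · have hfg : f * g = 0 := by rw [mul_eq_comp]; exact range_le_ker_iff.mp h
    rw [hfg, ker_zero]
    exact ne_bot_of_le_ne_bot hf le_top
  · obtain ⟨c, hc, hc0⟩ := Submodule.exists_mem_ne_zero_of_ne_bot hf
    obtain ⟨y, rfl⟩ := h hc
    refine Submodule.ne_bot_iff _ |>.mpr ⟨y, ?_, fun hy => hc0 (by simp [hy])⟩
    simpa [mul_eq_comp] using hc

theorem range_mul_ne_top_of_right (f : Module.End R M) {g : Module.End R M}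
    (hg : range g ≠ ⊤) : range (f * g) ≠ ⊤ := by
  rcases huni (range g) (ker f) with h | h
  · have hfg : f * g = 0 := by rw [mul_eq_comp]; exact range_le_ker_iff.mp h
    rw [hfg, range_zero]
    exact ne_top_of_le_ne_top hg bot_le
  · rw [mul_eq_comp, range_comp]
    intro htop
    apply hg
    rw [← sup_eq_left.mpr h, ← Submodule.comap_map_eq, htop, Submodule.comap_top]

variable [Nontrivial M]

theorem isCompletelyPrimeIdealSet_not_injective :
    IsCompletelyPrimeIdealSet {f : Module.End R M | ¬ Function.Injective f} := by
  simp only [← ker_eq_bot]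
  refine ⟨⟨⟨?zero, ?add, ?mul_right, ?neg⟩, ?mul_left⟩, ?proper, ?prime⟩
  case zero => simp
  case add =>
    intro f hf g hg
    rcases huni (ker f) (ker g) with h | h
    · exact ne_bot_of_le_ne_bot hf fun x hx => by simp [mem_ker.mp hx, mem_ker.mp (h hx)]
    · exact ne_bot_of_le_ne_bot hg fun x hx => by simp [mem_ker.mp hx, mem_ker.mp (h hx)]
  case mul_right => exact fun f hf g => ker_mul_ne_bot_of_left huni hf g
  case neg => simp
  case mul_left =>
    intro g hg f
    exact ne_bot_of_le_ne_bot hg fun x hx => by simp [mem_ker.mp hx]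
  case proper => exact (Set.ne_univ_iff_exists_notMem _).mpr ⟨1, by simp [one_eq_id]⟩
  case prime =>
    intro f g hfg
    contrapose! hfg
    simp_all [mul_eq_comp, ker_comp]

theorem isCompletelyPrimeIdealSet_not_surjective :
    IsCompletelyPrimeIdealSet {f : Module.End R M | ¬ Function.Surjective f} := by
  simp only [← range_eq_top]
  refine ⟨⟨⟨?zero, ?add, ?mul_right, ?neg⟩, ?mul_left⟩, ?proper, ?prime⟩
  case zero => simp
  case add =>
    intro f hf g hg
    rcases huni (range f) (range g) with h | h
    · exact ne_top_of_le_ne_top hg ((range_add_le f g).trans (sup_le h le_rfl))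
    · exact ne_top_of_le_ne_top hf ((range_add_le f g).trans (sup_le le_rfl h))
  case mul_right =>
    intro f hf g
    exact ne_top_of_le_ne_top hf (by rw [mul_eq_comp, range_comp]; exact map_le_range)
  case neg => simp
  case mul_left => exact fun g hg f => range_mul_ne_top_of_right huni f hg
  case proper => exact (Set.ne_univ_iff_exists_notMem _).mpr ⟨1, by simp [one_eq_id]⟩
  case prime =>
    intro f g hfg
    contrapose! hfg
    simp_all [mul_eq_comp, range_comp]

end Module.End

namespace MorphEnd

variable {A : Type u} [Ring A] {M₀ M₁ : Type u} [AddCommGroup M₀] [AddCommGroup M₁]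
  [Module A M₀] [Module A M₁] (μ : M₀ →ₗ[A] M₁)

def fst : MorphEnd μ →+* Module.End A M₀ := (RingHom.fst _ _).comp (MorphEnd μ).subtype

def snd : MorphEnd μ →+* Module.End A M₁ := (RingHom.snd _ _).comp (MorphEnd μ).subtype

theorem isUnit_of_bijective {u : MorphEnd μ} (h₀ : Function.Bijective (fst μ u))
    (h₁ : Function.Bijective (snd μ u)) : IsUnit u := by
  obtain ⟨⟨u₀, u₁⟩, hu⟩ := u
  let e₀ := LinearEquiv.ofBijective u₀ h₀
  let e₁ := LinearEquiv.ofBijective u₁ h₁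
  have hmem : ((e₀.symm : Module.End A M₀), (e₁.symm : Module.End A M₁)) ∈ MorphEnd μ :=
    fun x => e₁.injective <| by
      change e₁ (e₁.symm (μ x)) = u₁ (μ (e₀.symm x))
      rw [e₁.apply_symm_apply, hu]
      exact congrArg μ (e₀.apply_symm_apply x).symm
  refine isUnit_iff_exists.mpr ⟨⟨_, hmem⟩, ?_, ?_⟩ <;>
    refine Subtype.ext (Prod.ext (LinearMap.ext fun x => ?_) (LinearMap.ext fun x => ?_))
  exacts [e₀.apply_symm_apply x, e₁.apply_symm_apply x, e₀.symm_apply_apply x,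
    e₁.symm_apply_apply x]

end MorphEnd

/-- Let `μ : M₀ → M₁` be an object of `Morph(Mod-R)` with `M₀`, `M₁`
non-zero uniserial right `R`-modules. Then `E_M` has at most four maximal right
(respectively, left) ideals: every maximal right (left) ideal of `E_M` is among the
completely prime two-sided ideals
`I₀ = {(u₀,u₁) ∈ E_M : u₀ not injective}`, `I₁ = {(u₀,u₁) : u₁ not injective}`,
`K₀ = {(u₀,u₁) : u₀ not surjective}` and `K₁ = {(u₀,u₁) : u₁ not surjective}`. -/
theorem morphEnd_uniserial_max_ideals (R : Type u) [Ring R] (M₀ M₁ : Type u)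
    [AddCommGroup M₀] [AddCommGroup M₁] [Module Rᵐᵒᵖ M₀] [Module Rᵐᵒᵖ M₁]
    [Nontrivial M₀] [Nontrivial M₁]
    (huni₀ : ∀ A B : Submodule Rᵐᵒᵖ M₀, A ≤ B ∨ B ≤ A)
    (huni₁ : ∀ A B : Submodule Rᵐᵒᵖ M₁, A ≤ B ∨ B ≤ A)
    (μ : M₀ →ₗ[Rᵐᵒᵖ] M₁) :
    (IsCompletelyPrimeIdealSet {u : MorphEnd μ |
        ¬ Function.Injective (u : Module.End Rᵐᵒᵖ M₀ × Module.End Rᵐᵒᵖ M₁).1}) ∧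
    (IsCompletelyPrimeIdealSet {u : MorphEnd μ |
        ¬ Function.Injective (u : Module.End Rᵐᵒᵖ M₀ × Module.End Rᵐᵒᵖ M₁).2}) ∧
    (IsCompletelyPrimeIdealSet {u : MorphEnd μ |
        ¬ Function.Surjective (u : Module.End Rᵐᵒᵖ M₀ × Module.End Rᵐᵒᵖ M₁).1}) ∧
    (IsCompletelyPrimeIdealSet {u : MorphEnd μ |
        ¬ Function.Surjective (u : Module.End Rᵐᵒᵖ M₀ × Module.End Rᵐᵒᵖ M₁).2}) ∧
    (∀ P : Set (MorphEnd μ), IsMaxRightIdealSet P →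
      P = {u : MorphEnd μ |
          ¬ Function.Injective (u : Module.End Rᵐᵒᵖ M₀ × Module.End Rᵐᵒᵖ M₁).1} ∨
      P = {u : MorphEnd μ |
          ¬ Function.Injective (u : Module.End Rᵐᵒᵖ M₀ × Module.End Rᵐᵒᵖ M₁).2} ∨
      P = {u : MorphEnd μ |
          ¬ Function.Surjective (u : Module.End Rᵐᵒᵖ M₀ × Module.End Rᵐᵒᵖ M₁).1} ∨
      P = {u : MorphEnd μ |
          ¬ Function.Surjective (u : Module.End Rᵐᵒᵖ M₀ × Module.End Rᵐᵒᵖ M₁).2}) ∧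
    (∀ P : Set (MorphEnd μ), IsMaxLeftIdealSet P →
      P = {u : MorphEnd μ |
          ¬ Function.Injective (u : Module.End Rᵐᵒᵖ M₀ × Module.End Rᵐᵒᵖ M₁).1} ∨
      P = {u : MorphEnd μ |
          ¬ Function.Injective (u : Module.End Rᵐᵒᵖ M₀ × Module.End Rᵐᵒᵖ M₁).2} ∨
      P = {u : MorphEnd μ |
          ¬ Function.Surjective (u : Module.End Rᵐᵒᵖ M₀ × Module.End Rᵐᵒᵖ M₁).1} ∨
      P = {u : MorphEnd μ |
          ¬ Function.Surjective (u : Module.End Rᵐᵒᵖ M₀ × Module.End Rᵐᵒᵖ M₁).2}) := by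
  classical
  have hI₀ := (Module.End.isCompletelyPrimeIdealSet_not_injective huni₀).preimage (MorphEnd.fst μ)
  have hI₁ := (Module.End.isCompletelyPrimeIdealSet_not_injective huni₁).preimage (MorphEnd.snd μ)
  have hK₀ :=
    (Module.End.isCompletelyPrimeIdealSet_not_surjective huni₀).preimage (MorphEnd.fst μ)
  have hK₁ :=
    (Module.End.isCompletelyPrimeIdealSet_not_surjective huni₁).preimage (MorphEnd.snd μ)
  set s : Finset (Set (MorphEnd μ)) :=
    {MorphEnd.fst μ ⁻¹' {f | ¬ Function.Injective f},
      MorphEnd.snd μ ⁻¹' {f | ¬ Function.Injective f},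
      MorphEnd.fst μ ⁻¹' {f | ¬ Function.Surjective f},
      MorphEnd.snd μ ⁻¹' {f | ¬ Function.Surjective f}}
  have hs : ∀ Q ∈ s, IsCompletelyPrimeIdealSet Q := by
    simp only [s, Finset.mem_insert, Finset.mem_singleton]
    rintro Q (rfl | rfl | rfl | rfl) <;> assumption
  have hcov : ∀ u : MorphEnd μ, ¬ IsUnit u → ∃ Q ∈ s, u ∈ Q := by
    intro u hu
    contrapose! hu
    simp only [s, Finset.mem_insert, Finset.mem_singleton, forall_eq_or_imp, forall_eq,
      Set.preimage_ofPred_eq, Set.mem_ofPred_eq, not_not] at hu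
    exact MorphEnd.isUnit_of_bijective μ ⟨hu.1, hu.2.2.1⟩ ⟨hu.2.1, hu.2.2.2⟩
  refine ⟨hI₀, hI₁, hK₀, hK₁, fun P hP => ?_, fun P hP => ?_⟩
  · have hPs := IsMaxRightIdealSet.mem_of_nonunits_subset_biUnion s hs hcov hP
    simp only [s, Finset.mem_insert, Finset.mem_singleton] at hPs
    exact hPs
  · have hPs := IsMaxLeftIdealSet.mem_of_nonunits_subset_biUnion s hs hcov hP
    simp only [s, Finset.mem_insert, Finset.mem_singleton] at hPs
    exact hPs
end
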